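/- Fix j ∈ K̄ with j² = ℏ, E = K(j) ⊆ K̄, and σ₂ ∈ Gal(K̄/K) with σ₂(j) = −j. Then: (a) there exists X ∈ GL(n, K̄) with all entries in E such that σ₂(X) = X·S; and (b) every such X is a twisted cocycle associated to r_DJ, i.e. (Ad_{X⁻¹σ(X)} ⊗ Ad_{X⁻¹σ(X)})(r_DJ) = r_DJ for all σ ∈ Gal(K̄/E) and (Ad_{X⁻¹σ₂(X)} ⊗ Ad_{X⁻¹σ₂(X)})(r_DJ) = r_DJ^{21}. In particular the set of twisted cocycles associated to r_DJ is non-empty. -/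

import Mathlib

open Matrix
open scoped TensorProduct

noncomputable section

/-- `K = ℂ((ℏ))`, the field of formal Laurent series over `ℂ`. -/
abbrev K : Type := LaurentSeries ℂ

/-- The series variable `ℏ` of `K = ℂ((ℏ))`. -/
def hbar : K := HahnSeries.single (1 : ℤ) (1 : ℂ)

/-- A fixed algebraic closure of `K`. -/
abbrev Kbar : Type := AlgebraicClosure K

/-- `E = K(j)`, the subfield of `K̄` generated over `K` by `j`. -/
abbrev Efield (j : Kbar) : IntermediateField K Kbar :=
  IntermediateField.adjoin K {j}

/-- Conjugation `a ↦ X a X⁻¹` as a linear endomorphism of `Mₙ(F)`. -/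
def conjLin (F : Type*) [Field F] {n : ℕ} (X : Matrix (Fin n) (Fin n) F) :
    Matrix (Fin n) (Fin n) F →ₗ[F] Matrix (Fin n) (Fin n) F :=
  (LinearMap.mulLeft F X).comp (LinearMap.mulRight F X⁻¹)

/-- The operator `Ad_X ⊗ Ad_X : a ⊗ b ↦ (X a X⁻¹) ⊗ (X b X⁻¹)` on
`Mₙ(F) ⊗_F Mₙ(F)`. -/
def AdT (F : Type*) [Field F] {n : ℕ} (X : Matrix (Fin n) (Fin n) F) :
    (Matrix (Fin n) (Fin n) F ⊗[F] Matrix (Fin n) (Fin n) F) →ₗ[F]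
      (Matrix (Fin n) (Fin n) F ⊗[F] Matrix (Fin n) (Fin n) F) :=
  TensorProduct.map (conjLin F X) (conjLin F X)

/-- `Ω₀ = Σᵢ Eᵢᵢ ⊗ Eᵢᵢ − (1/n)·(I ⊗ I)`. -/
def Omega0 (F : Type*) [Field F] (n : ℕ) :
    Matrix (Fin n) (Fin n) F ⊗[F] Matrix (Fin n) (Fin n) F :=
  (∑ i : Fin n, Matrix.single i i (1 : F) ⊗ₜ[F] Matrix.single i i (1 : F))
    - (n : F)⁻¹ • ((1 : Matrix (Fin n) (Fin n) F) ⊗ₜ[F] (1 : Matrix (Fin n) (Fin n) F))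

/-- The Drinfeld–Jimbo `r`-matrix `r_DJ = Σ_{i<j} E_ij ⊗ E_ji + (1/2)·Ω₀`. -/
def rDJ (F : Type*) [Field F] (n : ℕ) :
    Matrix (Fin n) (Fin n) F ⊗[F] Matrix (Fin n) (Fin n) F :=
  (∑ i : Fin n, ∑ j : Fin n,
      if (i : ℕ) < (j : ℕ) then
        Matrix.single i j (1 : F) ⊗ₜ[F] Matrix.single j i (1 : F)
      else 0)
    + (2⁻¹ : F) • Omega0 F n

/-- The matrix `S` with 1's on the antidiagonal and 0 elsewhere. -/
def Smat (F : Type*) [Field F] (n : ℕ) : Matrix (Fin n) (Fin n) F :=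
  Matrix.of fun i k => if (i : ℕ) + (k : ℕ) + 1 = n then 1 else 0

/-!
Take `X = (1 + j)·I + (1 − j)·S`. Since `S² = I`, its product with `(1 + j)·I − (1 − j)·S`
is `4j·I`, so `X` is invertible, and `σ₂` swaps the two coefficients, which is the same as
multiplying by `S` on the right. For any `X` as in (a), `X⁻¹σ(X) = I` when `σ` fixes `E`, while
`X⁻¹σ₂(X) = S`; conjugation by `S` reverses the indices, so it fixes `Ω₀` and sends the
strictly upper part `Σ_{i<k} E_ik ⊗ E_ki` of `r_DJ` to its flip `Σ_{i>k} E_ik ⊗ E_ki`.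
-/

section Antidiagonal

variable {F : Type*} [Field F] {n : ℕ}

lemma Smat_apply (i k : Fin n) : Smat F n i k = if i.rev = k then 1 else 0 := by
  simp only [Smat, Matrix.of_apply, Fin.ext_iff, Fin.val_rev]
  congr 1
  have := k.isLt
  exact propext (by omega)

lemma Smat_mul_self : Smat F n * Smat F n = 1 := by
  ext i k
  simp [Matrix.mul_apply, Smat_apply, Matrix.one_apply, Fin.rev_eq_iff]

lemma Smat_inv : (Smat F n)⁻¹ = Smat F n :=
  Matrix.inv_eq_right_inv Smat_mul_self

lemma conjLin_Smat_single (i k : Fin n) (c : F) :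
    conjLin F (Smat F n) (Matrix.single i k c) = Matrix.single i.rev k.rev c := by
  ext a b
  simp [conjLin, Smat_inv, Matrix.mul_apply, Smat_apply, Matrix.single_apply, Fin.rev_eq_iff,
    ite_and, eq_comm (a := i)]
  split_ifs <;> rfl

lemma conjLin_Smat_one : conjLin F (Smat F n) 1 = 1 := by
  simp [conjLin, Smat_inv, Smat_mul_self]

lemma conjLin_one : conjLin F (1 : Matrix (Fin n) (Fin n) F) = LinearMap.id := by
  ext A : 1
  simp [conjLin]

lemma AdT_one : AdT F (1 : Matrix (Fin n) (Fin n) F) = LinearMap.id := by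
  rw [AdT, conjLin_one, TensorProduct.map_id]

lemma AdT_Smat_tmul_single (i k p q : Fin n) :
    AdT F (Smat F n) (Matrix.single i k (1 : F) ⊗ₜ Matrix.single p q 1) =
      Matrix.single i.rev k.rev 1 ⊗ₜ Matrix.single p.rev q.rev 1 := by
  simp only [AdT, TensorProduct.map_tmul, conjLin_Smat_single]

lemma comm_Omega0 : TensorProduct.comm F _ _ (Omega0 F n) = Omega0 F n := by
  simp [Omega0, map_sub, map_sum]

lemma AdT_Smat_Omega0 : AdT F (Smat F n) (Omega0 F n) = Omega0 F n := by
  simp only [Omega0, map_sub, map_sum, map_smul, AdT_Smat_tmul_single]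
  simp only [AdT, TensorProduct.map_tmul, conjLin_Smat_one]
  congr 1
  exact Fintype.sum_equiv Fin.revPerm _ _ fun i => rfl

lemma AdT_Smat_upper :
    AdT F (Smat F n) (∑ i : Fin n, ∑ k : Fin n,
      if (i : ℕ) < k then Matrix.single i k (1 : F) ⊗ₜ Matrix.single k i 1 else 0) =
    TensorProduct.comm F _ _ (∑ i : Fin n, ∑ k : Fin n,
      if (i : ℕ) < k then Matrix.single i k (1 : F) ⊗ₜ Matrix.single k i 1 else 0) := by
  simp only [map_sum, apply_ite (AdT F (Smat F n)), apply_ite (TensorProduct.comm F _ _),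
    map_zero, AdT_Smat_tmul_single, TensorProduct.comm_tmul]
  rw [Finset.sum_comm]
  refine Fintype.sum_equiv Fin.revPerm _ _ fun i => Fintype.sum_equiv Fin.revPerm _ _ fun k => ?_
  simp only [Fin.revPerm_apply, ← Fin.lt_def, Fin.rev_lt_rev]

lemma AdT_Smat_rDJ : AdT F (Smat F n) (rDJ F n) = TensorProduct.comm F _ _ (rDJ F n) := by
  rw [rDJ, map_add, map_add, map_smul, map_smul, AdT_Smat_Omega0, comm_Omega0, AdT_Smat_upper]

end Antidiagonal

section Involution

variable {R A : Type*} [CommRing R] [Ring A] [Algebra R A] {s : A}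

lemma smul_one_add_smul_mul_smul_one_sub_smul (hs : s * s = 1) (a b : R) :
    (a • (1 : A) + b • s) * (a • 1 - b • s) = (a ^ 2 - b ^ 2) • (1 : A) := by
  simp only [add_mul, mul_sub, smul_mul_smul_comm, one_mul, mul_one, hs]
  module

lemma isUnit_smul_one_add_smul (hs : s * s = 1) {a b : R} (h : IsUnit (a ^ 2 - b ^ 2)) :
    IsUnit (a • (1 : A) + b • s) := by
  have hright := smul_one_add_smul_mul_smul_one_sub_smul hs a (-b)
  rw [neg_smul, sub_neg_eq_add, ← sub_eq_add_neg, neg_sq] at hright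
  refine isUnit_iff_exists.2 ⟨(h.unit⁻¹ : Rˣ) • (a • 1 - b • s), ?_, ?_⟩
  · rw [mul_smul_comm, smul_one_add_smul_mul_smul_one_sub_smul hs, Units.smul_def, smul_smul,
      h.val_inv_mul, one_smul]
  · rw [smul_mul_assoc, hright, Units.smul_def, smul_smul, h.val_inv_mul, one_smul]

end Involution

section TwistMat

variable {F : Type*} [Field F] (n : ℕ) (j : F)

def twistMat : Matrix (Fin n) (Fin n) F := (1 + j) • 1 + (1 - j) • Smat F n

variable {n j}

lemma isUnit_twistMat (h2 : (2 : F) ≠ 0) (hj : j ≠ 0) : IsUnit (twistMat n j) := by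
  refine isUnit_smul_one_add_smul Smat_mul_self (isUnit_iff_ne_zero.2 ?_)
  have h4 : (1 + j) ^ 2 - (1 - j) ^ 2 = 2 * 2 * j := by ring
  rw [h4]
  exact mul_ne_zero (mul_ne_zero h2 h2) hj

lemma twistMat_apply_mem {T : Type*} [SetLike T F] [SubringClass T F] {E : T} (hj : j ∈ E)
    (a b : Fin n) : twistMat n j a b ∈ E := by
  simp only [twistMat, Matrix.add_apply, Matrix.smul_apply, smul_eq_mul, Matrix.one_apply,
    Smat_apply]
  split_ifs <;> simp [add_mem, sub_mem, one_mem, hj]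

lemma twistMat_mul_Smat : twistMat n j * Smat F n = (1 - j) • 1 + (1 + j) • Smat F n := by
  rw [twistMat, add_mul, smul_mul_assoc, smul_mul_assoc, one_mul, Smat_mul_self, add_comm]

lemma twistMat_map {G : Type*} [FunLike G F F] [RingHomClass G F F] {σ : G} (hσ : σ j = -j) :
    (twistMat n j).map σ = twistMat n j * Smat F n := by
  rw [twistMat_mul_Smat]
  ext a b
  simp [twistMat, Matrix.one_apply, Smat_apply, apply_ite σ, hσ, ← sub_eq_add_neg]

end TwistMat

instance : CharZero Kbar := charZero_of_injective_algebraMap (algebraMap ℂ Kbar).injective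

lemma hbar_ne_zero : hbar ≠ 0 :=
  HahnSeries.single_ne_zero one_ne_zero

theorem statement12_general (n : ℕ) (j : Kbar)
    (hj : j ^ 2 = algebraMap K Kbar hbar)
    (σ₂ : Kbar ≃ₐ[K] Kbar) (hσ : σ₂ j = -j) :
    (∃ X : Matrix (Fin n) (Fin n) Kbar,
        IsUnit X ∧ (∀ a b, X a b ∈ Efield j) ∧ X.map σ₂ = X * Smat Kbar n) ∧
    ∀ X : Matrix (Fin n) (Fin n) Kbar,
      IsUnit X → (∀ a b, X a b ∈ Efield j) → X.map σ₂ = X * Smat Kbar n →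
      (∀ σ : Kbar ≃ₐ[K] Kbar, (∀ x ∈ Efield j, σ x = x) →
          AdT Kbar (X⁻¹ * X.map σ) (rDJ Kbar n) = rDJ Kbar n) ∧
        AdT Kbar (X⁻¹ * X.map σ₂) (rDJ Kbar n)
          = (TensorProduct.comm Kbar _ _) (rDJ Kbar n) := by
  have hj0 : j ≠ 0 :=
    ne_zero_pow two_ne_zero (hj ▸ (map_ne_zero _).2 hbar_ne_zero)
  refine ⟨⟨twistMat n j, isUnit_twistMat two_ne_zero hj0,
    twistMat_apply_mem (IntermediateField.mem_adjoin_simple_self K j), twistMat_map hσ⟩, ?_⟩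
  intro X hX hXE hXσ₂
  have hXinv : X⁻¹ * X = 1 := X.nonsing_inv_mul (X.isUnit_iff_isUnit_det.mp hX)
  refine ⟨fun σ hσE => ?_, ?_⟩
  · have hXσ : X.map σ = X := Matrix.ext fun a b => hσE _ (hXE a b)
    rw [hXσ, hXinv, AdT_one, LinearMap.id_apply]
  · rw [hXσ₂, ← mul_assoc, hXinv, one_mul, AdT_Smat_rDJ]

/-- (a) There exists `X ∈ GL(n, K̄)` with all entries in `E = K(j)` such that
`σ₂(X) = X·S`; and (b) every such `X` is a twisted cocycle associated to
`r_DJ`.  In particular the set of twisted cocycles for `r_DJ` is non-empty. -/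
theorem statement12 (n : ℕ) (hn : 2 ≤ n) (j : Kbar)
    (hj : j ^ 2 = algebraMap K Kbar hbar)
    (σ₂ : Kbar ≃ₐ[K] Kbar) (hσ : σ₂ j = -j) :
    (∃ X : Matrix (Fin n) (Fin n) Kbar,
        IsUnit X ∧ (∀ a b, X a b ∈ Efield j) ∧ X.map σ₂ = X * Smat Kbar n) ∧
    ∀ X : Matrix (Fin n) (Fin n) Kbar,
      IsUnit X → (∀ a b, X a b ∈ Efield j) → X.map σ₂ = X * Smat Kbar n →
      (∀ σ : Kbar ≃ₐ[K] Kbar, (∀ x ∈ Efield j, σ x = x) →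
          AdT Kbar (X⁻¹ * X.map σ) (rDJ Kbar n) = rDJ Kbar n) ∧
        AdT Kbar (X⁻¹ * X.map σ₂) (rDJ Kbar n)
          = (TensorProduct.comm Kbar _ _) (rDJ Kbar n) :=
  statement12_general n j hj σ₂ hσ
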